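/- arXiv:1212.3539 — 3 statements merged into one kernel-verified Lean document; each statement's English description precedes it below -/
import Mathlib

section
/- Let (K, τ) : (N, D) → (M, C) be a lax morphism of comonads, and assume that for every D-coalgebra (N, d), the coreflexive pair C(τ_N)∘δ_{K(N)}, CK(d) : CK(N) ⇉ CKD(N) has an equalizer in M_C. Then for each object N of N, the canonical cofork with vertex CK(N) computed at the cofree D-coalgebra (D(N), δ_N) is a split cofork in M_C; in particular, K^τ(F_D(N)) ≅ F_C(K(N)), i.e., the induced functor K^τ : N_D → M_C commutes with the cofree coalgebra functors up to isomorphism. -/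
/-! Under the adjunction `U_C ⊣ F_C`, `coindMap X` is the transpose of `τ_X`, and the two lax
axioms on `τ` transpose to the identities `coindMap X ≫ F_C K(δ_X) = coindMap X ≫ coindMap (D X)`
and `coindMap X ≫ F_C K(ε_X) = 𝟙`; naturality of `τ` makes `coindMap` natural in `X`. Together
with `D`'s counit law, `F_C K(ε_X)` and `F_C K(D ε_X)` therefore split the cofork at the cofree
coalgebra `(D X, δ_X)`, and a split equalizer is an equalizer. -/

open CategoryTheory CategoryTheory.Limits

variable {M N : Type*} [Category M] [Category N]

/-- Given a comonad `C` on `M`, a comonad `D` on `N`, a functor `K : N ⥤ M` and a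
transformation `τ : CK ⟶ KD`, the morphism of cofree `C`-coalgebras
`F_C(K(X)) ⟶ F_C(K(D(X)))` whose underlying map is `C(τ_X) ∘ δ_{K(X)}`; it corresponds
to `τ_X : C(K(X)) ⟶ K(D(X))` under the adjunction `U_C ⊣ F_C`. -/
def coindMap (C : Comonad M) (D : Comonad N) (K : N ⥤ M)
    (τ : K ⋙ C.toFunctor ⟶ D.toFunctor ⋙ K) (X : N) :
    C.cofree.obj (K.obj X) ⟶ C.cofree.obj (K.obj (D.obj X)) :=
  (C.adj.homEquiv (C.cofree.obj (K.obj X)) (K.obj (D.obj X))) (τ.app X)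

lemma CategoryTheory.Comonad.adj_homEquiv_apply_f (C : Comonad M) (A : C.Coalgebra) {Y : M}
    (f : A.A ⟶ Y) : (C.adj.homEquiv A Y f).f = A.a ≫ C.map f := by
  simp only [Adjunction.homEquiv, Comonad.adj_unit, Equiv.coe_fn_mk]
  rfl

def CategoryTheory.Limits.Fork.IsLimit.swap {W X Y : M} {f g : X ⟶ Y} {ι : W ⟶ X}
    {w : ι ≫ f = ι ≫ g} (h : IsLimit (Fork.ofι ι w)) : IsLimit (Fork.ofι ι w.symm) :=
  Fork.IsLimit.mk' _ fun s =>
    ⟨(Fork.IsLimit.lift' h s.ι s.condition.symm).1, (Fork.IsLimit.lift' h s.ι _).2,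
      fun hm => Fork.IsLimit.hom_ext h (hm.trans (Fork.IsLimit.lift' h s.ι _).2.symm)⟩

section

variable (C : Comonad M) (D : Comonad N) (K : N ⥤ M) (τ : K ⋙ C.toFunctor ⟶ D.toFunctor ⋙ K)

lemma coindMap_f (X : N) :
    (coindMap C D K τ X).f = C.δ.app (K.obj X) ≫ C.map (τ.app X) :=
  C.adj_homEquiv_apply_f _ _

variable {C D K τ} in
lemma coindMap_comp_cofree_map {X : N} {Y : M} {g : K.obj (D.obj X) ⟶ Y}
    {h : C.obj (K.obj X) ⟶ Y} (hg : τ.app X ≫ g = h) :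
    coindMap C D K τ X ≫ C.cofree.map g = C.adj.homEquiv (C.cofree.obj (K.obj X)) Y h := by
  subst hg
  exact (C.adj.homEquiv_naturality_right (X := C.cofree.obj (K.obj X)) (τ.app X) g).symm

lemma coindMap_naturality {X Y : N} (f : X ⟶ Y) :
    coindMap C D K τ X ≫ C.cofree.map (K.map (D.map f)) =
      C.cofree.map (K.map f) ≫ coindMap C D K τ Y := by
  rw [coindMap_comp_cofree_map (g := K.map (D.map f)) (τ.naturality f).symm]
  exact C.adj.homEquiv_naturality_left (C.cofree.map (K.map f)) (τ.app Y)

lemma coindMap_comp_cofree_map_counit {X : N}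
    (hε : τ.app X ≫ K.map (D.ε.app X) = C.ε.app (K.obj X)) :
    coindMap C D K τ X ≫ C.cofree.map (K.map (D.ε.app X)) = 𝟙 _ := by
  rw [coindMap_comp_cofree_map hε]
  ext
  exact (C.adj_homEquiv_apply_f _ _).trans <|
    (C.right_counit (K.obj X)).trans (Comonad.Coalgebra.id_f (C.cofree.obj (K.obj X))).symm

lemma coindMap_comp_cofree_map_comul {X : N}
    (hδ : τ.app X ≫ K.map (D.δ.app X) =
      C.δ.app (K.obj X) ≫ C.map (τ.app X) ≫ τ.app (D.obj X)) :
    coindMap C D K τ X ≫ C.cofree.map (K.map (D.δ.app X)) =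
      coindMap C D K τ X ≫ coindMap C D K τ (D.obj X) := by
  rw [coindMap_comp_cofree_map (hδ.trans (Category.assoc _ _ _).symm), ← coindMap_f]
  exact C.adj.homEquiv_naturality_left (coindMap C D K τ X) (τ.app (D.obj X))

end

/-- `IsSplitEqualizer` splits the second map of the pair, so the pair is listed in the reverse of
its order in the canonical cofork. -/
def isSplitEqualizerCoindMap (C : Comonad M) (D : Comonad N) (K : N ⥤ M)
    (τ : K ⋙ C.toFunctor ⟶ D.toFunctor ⋙ K) (X : N)
    (hδ : τ.app X ≫ K.map (D.δ.app X) =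
      C.δ.app (K.obj X) ≫ C.map (τ.app X) ≫ τ.app (D.obj X))
    (hε : τ.app X ≫ K.map (D.ε.app X) = C.ε.app (K.obj X)) :
    IsSplitEqualizer (coindMap C D K τ (D.obj X)) (C.cofree.map (K.map (D.δ.app X)))
      (coindMap C D K τ X) where
  leftRetraction := C.cofree.map (K.map (D.ε.app X))
  rightRetraction := C.cofree.map (K.map (D.map (D.ε.app X)))
  condition := (coindMap_comp_cofree_map_comul C D K τ hδ).symm
  ι_leftRetraction := coindMap_comp_cofree_map_counit C D K τ hε
  bottom_rightRetraction := by
    rw [← Functor.map_comp, ← Functor.map_comp, D.right_counit, K.map_id, C.cofree.map_id]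
  top_rightRetraction := coindMap_naturality C D K τ (D.ε.app X)

theorem stmt_7_general (C : Comonad M) (D : Comonad N) (K : N ⥤ M)
    (τ : K ⋙ C.toFunctor ⟶ D.toFunctor ⋙ K)
    (lax_δ : ∀ X : N,
      τ.app X ≫ K.map (D.δ.app X) =
        C.δ.app (K.obj X) ≫ C.map (τ.app X) ≫ τ.app (D.obj X))
    (lax_ε : ∀ X : N, τ.app X ≫ K.map (D.ε.app X) = C.ε.app (K.obj X)) :
    ∀ X : N,
      ∃ w : coindMap C D K τ X ≫ C.cofree.map (K.map (D.δ.app X)) =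
            coindMap C D K τ X ≫ coindMap C D K τ (D.obj X),
        (coindMap C D K τ X ≫ C.cofree.map (K.map (D.ε.app X)) = 𝟙 _) ∧
        (C.cofree.map (K.map (D.δ.app X)) ≫
            C.cofree.map (K.map (D.map (D.ε.app X))) = 𝟙 _) ∧
        (coindMap C D K τ (D.obj X) ≫ C.cofree.map (K.map (D.map (D.ε.app X))) =
          C.cofree.map (K.map (D.ε.app X)) ≫ coindMap C D K τ X) ∧
        Nonempty (IsLimit (Fork.ofι (coindMap C D K τ X) w)) := by
  intro X
  let split := isSplitEqualizerCoindMap C D K τ X (lax_δ X) (lax_ε X)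
  exact ⟨split.condition.symm, split.ι_leftRetraction, split.bottom_rightRetraction,
    split.top_rightRetraction, ⟨Fork.IsLimit.swap split.isEqualizer⟩⟩

/-- Let `(K, τ) : (N, D) → (M, C)` be a lax morphism of comonads, and assume that for
every `D`-coalgebra `(N, d)` the coreflexive pair `C(τ_N) ∘ δ_{K(N)}, CK(d)` has an
equalizer in `M_C`.  Then for every object `X` of `N`, the canonical cofork at the cofree
`D`-coalgebra `(D(X), δ_X)` is a split cofork in `M_C`; in particular its ι-map
is an equalizer, so `K^τ(F_D(X)) ≅ F_C(K(X))`. -/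
theorem stmt_7 (C : Comonad M) (D : Comonad N) (K : N ⥤ M)
    (τ : K ⋙ C.toFunctor ⟶ D.toFunctor ⋙ K)
    (lax_δ : ∀ X : N,
      τ.app X ≫ K.map (D.δ.app X) =
        C.δ.app (K.obj X) ≫ C.map (τ.app X) ≫ τ.app (D.obj X))
    (lax_ε : ∀ X : N, τ.app X ≫ K.map (D.ε.app X) = C.ε.app (K.obj X))
    (heq : ∀ A : D.Coalgebra,
      HasEqualizer (coindMap C D K τ A.A) (C.cofree.map (K.map A.a))) :
    ∀ X : N,
      ∃ w : coindMap C D K τ X ≫ C.cofree.map (K.map (D.δ.app X)) =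
            coindMap C D K τ X ≫ coindMap C D K τ (D.obj X),
        (coindMap C D K τ X ≫ C.cofree.map (K.map (D.ε.app X)) = 𝟙 _) ∧
        (C.cofree.map (K.map (D.δ.app X)) ≫
            C.cofree.map (K.map (D.map (D.ε.app X))) = 𝟙 _) ∧
        (coindMap C D K τ (D.obj X) ≫ C.cofree.map (K.map (D.map (D.ε.app X))) =
          C.cofree.map (K.map (D.ε.app X)) ≫ coindMap C D K τ X) ∧
        Nonempty (IsLimit (Fork.ofι (coindMap C D K τ X) w)) :=
  stmt_7_general C D K τ lax_δ lax_ε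
end

section
/- (Conjugate Comonadicity Theorem.) Let (H, K) be an adjunction with H : M → N. The following are equivalent: (i) for every comonad C on M such that C and C² preserve equalizers of coreflexive H-split pairs, the comparison functor Q_C : M_C → N_{C̃} into coalgebras over the conjugate comonad C̃ = HCK is an equivalence; (ii) M has equalizers of all coreflexive H-split pairs, H preserves these equalizers, and H is conservative. -/
open CategoryTheory CategoryTheory.Limits

variable {M N : Type*} [Category M] [Category N]

/-- A parallel pair `(f, g)` in `M` is `H`-split if its image under `H` extends to a
split cofork (split equalizer) in `N`. -/
def IsHSplitPair (H : M ⥤ N) {A B : M} (f g : A ⟶ B) : Prop :=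
  ∃ (E : N) (ι : E ⟶ H.obj A) (r : H.obj A ⟶ E) (s : H.obj B ⟶ H.obj A),
    ι ≫ H.map f = ι ≫ H.map g ∧
    ι ≫ r = 𝟙 E ∧
    H.map f ≫ s = 𝟙 (H.obj A) ∧
    H.map g ≫ s = r ≫ ι

/-- A functor `F : M ⥤ N` preserves the equalizer of a parallel pair `(f, g)` in the sense
that any equalizer fork of `(f, g)` is carried to an equalizer fork of `(F f, F g)`. -/
def PreservesEqualizerOf (F : M ⥤ N) {A B : M} (f g : A ⟶ B) : Prop :=
  ∀ {E : M} (e : E ⟶ A) (w : e ≫ f = e ≫ g), IsLimit (Fork.ofι e w) →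
    Nonempty (IsLimit (Fork.ofι (f := F.map f) (g := F.map g) (F.map e)
      (by simp only [← Functor.map_comp, w])))

/-!
`(ii) ⇒ (i)` is Beck's comonadicity theorem for the composite adjunction `H U_C ⊣ F_C K`.
For a coalgebra `A` of the conjugate comonad and `G = F_C K`, the Beck pair `(G a, η_{GA})`
in `M_C` lies over a coreflexive `H`-split pair in `M`. Its equalizer exists in `M` and is
preserved by `C` and `C²`, so it lifts to `M_C`. It is preserved by `H` and hence by `H U_C`,
which is conservative because `H` and `U_C` are. These are the hypotheses of Beck's theorem.

`(i) ⇒ (ii)`: for the identity comonad the hypothesis on `C` holds trivially, and `M_C ≃ M`.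
So `H` is, up to an equivalence, the forgetful functor from the coalgebras of `HK`. That
functor reflects isomorphisms, and it creates equalizers of pairs whose image has a split
equalizer, because split equalizers are preserved by every functor.
-/

namespace CategoryTheory.Limits

variable {C : Type*} [Category C] {X Y : C} {f g : X ⟶ Y}

def Fork.IsLimit.swap_s11 {E : C} {e : E ⟶ X} {w : e ≫ f = e ≫ g} (h : IsLimit (Fork.ofι e w)) :
    IsLimit (Fork.ofι e w.symm) :=
  Fork.IsLimit.mk' _ fun s =>
    ⟨Fork.IsLimit.lift h s.ι s.condition.symm, Fork.IsLimit.lift_ι' h _ _,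
      fun hm => Fork.IsLimit.hom_ext h (hm.trans (Fork.IsLimit.lift_ι' h _ _).symm)⟩

theorem hasEqualizer_swap (h : HasEqualizer f g) : HasEqualizer g f :=
  ⟨⟨⟨_, Fork.IsLimit.swap_s11 (equalizerIsEqualizer f g)⟩⟩⟩

theorem preservesLimit_comp_of_hasLimit {J D E : Type*} [Category J] [Category D] [Category E]
    (K : J ⥤ C) (F : C ⥤ D) (G : D ⥤ E) [HasLimit K] [PreservesLimit K F]
    [PreservesLimit K (F ⋙ G)] : PreservesLimit (K ⋙ F) G :=
  preservesLimit_of_preserves_limit_cone (isLimitOfPreserves F (limit.isLimit K))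
    (isLimitOfPreserves (F ⋙ G) (limit.isLimit K))

end CategoryTheory.Limits

theorem CategoryTheory.IsCoreflexivePair.map {C D : Type*} [Category C] [Category D] (F : C ⥤ D)
    {X Y : C} (f g : X ⟶ Y) [IsCoreflexivePair f g] : IsCoreflexivePair (F.map f) (F.map g) :=
  IsCoreflexivePair.mk' (F.map (commonRetraction f g))
    (by rw [← F.map_comp, left_comp_retraction, F.map_id])
    (by rw [← F.map_comp, right_comp_retraction, F.map_id])

theorem isHSplitPair_iff_isCosplitPair {H : M ⥤ N} {A B : M} {f g : A ⟶ B} :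
    IsHSplitPair H f g ↔ H.IsCosplitPair g f := by
  constructor
  · rintro ⟨E, ι, r, s, hw, hιr, hfs, hgs⟩
    exact ⟨E, ι, ⟨⟨r, s, hw.symm, hιr, hfs, hgs⟩⟩⟩
  · rintro ⟨E, ι, ⟨q⟩⟩
    exact ⟨E, ι, q.leftRetraction, q.rightRetraction, q.condition.symm, q.ι_leftRetraction,
      q.bottom_rightRetraction, q.top_rightRetraction⟩

namespace PreservesEqualizerOf

variable {F : M ⥤ N} {A B : M} {f g : A ⟶ B}

theorem swap_s11 (h : PreservesEqualizerOf F f g) : PreservesEqualizerOf F g f :=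
  fun e w hl => (h e w.symm (Fork.IsLimit.swap_s11 hl)).map Fork.IsLimit.swap_s11

theorem of_preservesLimit (hF : PreservesLimit (parallelPair f g) F) :
    PreservesEqualizerOf F f g :=
  fun _ w hl => ⟨isLimitForkMapOfIsLimit F w hl⟩

theorem preservesLimit (hfg : HasEqualizer f g) (h : PreservesEqualizerOf F f g) :
    PreservesLimit (parallelPair f g) F :=
  let ⟨hl⟩ := h _ (equalizer.condition f g) (equalizerIsEqualizer f g)
  preservesLimit_of_preserves_limit_cone (equalizerIsEqualizer f g)
    ((isLimitMapConeForkEquiv F _).symm hl)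

end PreservesEqualizerOf

theorem preservesEqualizerOf_id {A B : M} (f g : A ⟶ B) : PreservesEqualizerOf (𝟭 M) f g :=
  fun _ _ hl => ⟨hl⟩

noncomputable section

namespace CategoryTheory.Comonad

variable {C D : Type*} [Category C] [Category D] {F : C ⥤ D} {G : D ⥤ C} (adj : F ⊣ G)

/- Beck's comonadicity theorem, reproved because Mathlib's
`comonadicOfHasPreservesReflectsFSplitEqualizers` needs `C` and `D` to share a morphism universe,
which `M_C` and `N` need not. -/

theorem homEquiv_comp_map_map_unit {X Y : C} (f : F.obj X ⟶ F.obj Y)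
    (hf : F.map (adj.unit.app X) ≫ F.map (G.map f) = f ≫ F.map (adj.unit.app Y)) :
    adj.homEquiv _ _ f ≫ G.map (F.map (adj.unit.app Y)) =
      adj.homEquiv _ _ f ≫ adj.unit.app (G.obj (F.obj Y)) := by
  rw [← adj.homEquiv_naturality_right, ← hf, adj.homEquiv_naturality_left]
  simp [Adjunction.homEquiv_unit]

theorem map_unit_comp_map_map {E : C} {X : D} {ι : E ⟶ G.obj X} {a : X ⟶ F.obj (G.obj X)}
    (ha : a ≫ adj.counit.app X = 𝟙 X) {φ : F.obj E ⟶ X} (hφ : φ ≫ a = F.map ι) :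
    F.map (adj.unit.app E) ≫ F.map (G.map φ) = φ ≫ a := by
  have hφ' : φ = F.map ι ≫ adj.counit.app X := by
    rw [← hφ, Category.assoc, ha, Category.comp_id]
  have hι : adj.unit.app E ≫ G.map φ = ι := by
    simp [hφ']
  rw [← F.map_comp, hι, hφ]

def unitForkIsLimit [F.ReflectsIsomorphisms] (B : C)
    [HasEqualizer (G.map ((comparison adj).obj B).a)
      (adj.unit.app (G.obj ((comparison adj).obj B).A))]
    [PreservesLimit (parallelPair (G.map ((comparison adj).obj B).a)
      (adj.unit.app (G.obj ((comparison adj).obj B).A))) F] :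
    IsLimit (Fork.ofι (adj.unit.app B) (adj.unit_naturality (adj.unit.app B))) :=
  let A := (comparison adj).obj B
  have := reflectsLimit_of_reflectsIsomorphisms
    (parallelPair (G.map A.a) (adj.unit.app (G.obj A.A))) F
  -- `F` maps this fork to the Beck equalizer of `A`
  isLimitOfIsLimitForkMap (f := G.map A.a) (g := adj.unit.app (G.obj A.A)) F _ (beckEqualizer A)

def comparisonFullyFaithful [F.ReflectsIsomorphisms]
    [∀ A : adj.toComonad.Coalgebra, HasEqualizer (G.map A.a) (adj.unit.app (G.obj A.A))]
    [∀ A : adj.toComonad.Coalgebra,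
      PreservesLimit (parallelPair (G.map A.a) (adj.unit.app (G.obj A.A))) F] :
    (comparison adj).FullyFaithful where
  preimage {X Y} h := Fork.IsLimit.lift (unitForkIsLimit adj Y) (adj.homEquiv _ _ h.f)
    (homEquiv_comp_map_map_unit adj h.f h.h)
  map_preimage {X Y} h := by
    ext
    change F.map _ = h.f
    apply (adj.homEquiv X (F.obj Y)).injective
    rw [Adjunction.homEquiv_unit, adj.unit_naturality]
    exact Fork.IsLimit.lift_ι' (unitForkIsLimit adj Y) _ _
  preimage_map {X Y} f := Fork.IsLimit.hom_ext (unitForkIsLimit adj Y) (by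
    rw [Fork.IsLimit.lift_ι', comparison_map_f, Adjunction.homEquiv_unit, Fork.ι_ofι,
      adj.unit_naturality])

def comparisonObjIsoOfIsLimit (A : adj.toComonad.Coalgebra) {E : C} (ι : E ⟶ G.obj A.A)
    (w : F.map ι ≫ adj.toComonad.map A.a = F.map ι ≫ adj.toComonad.δ.app A.A)
    (hι : IsLimit (Fork.ofι (F.map ι) w)) : (comparison adj).obj E ≅ A :=
  let φ : F.obj E ≅ A.A := hι.conePointUniqueUpToIso (beckEqualizer A)
  Coalgebra.isoMk φ (map_unit_comp_map_map adj A.counit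
    (IsLimit.conePointUniqueUpToIso_hom_comp hι (beckEqualizer A) WalkingParallelPair.zero))

instance comparison_essSurj
    [∀ A : adj.toComonad.Coalgebra, HasEqualizer (G.map A.a) (adj.unit.app (G.obj A.A))]
    [∀ A : adj.toComonad.Coalgebra,
      PreservesLimit (parallelPair (G.map A.a) (adj.unit.app (G.obj A.A))) F] :
    (comparison adj).EssSurj where
  mem_essImage A := ⟨_, ⟨comparisonObjIsoOfIsLimit adj A _ _
    (isLimitOfHasEqualizerOfPreservesLimit F (G.map A.a) (adj.unit.app (G.obj A.A)))⟩⟩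

theorem comparison_isEquivalence [F.ReflectsIsomorphisms]
    [∀ A : adj.toComonad.Coalgebra, HasEqualizer (G.map A.a) (adj.unit.app (G.obj A.A))]
    [∀ A : adj.toComonad.Coalgebra,
      PreservesLimit (parallelPair (G.map A.a) (adj.unit.app (G.obj A.A))) F] :
    (comparison adj).IsEquivalence where
  faithful := (comparisonFullyFaithful adj).faithful
  full := (comparisonFullyFaithful adj).full

theorem isCoreflexivePair_unit_map (A : adj.toComonad.Coalgebra) :
    IsCoreflexivePair (adj.unit.app (G.obj A.A)) (G.map A.a) :=
  IsCoreflexivePair.mk' (G.map (adj.counit.app A.A)) (adj.right_triangle_components _)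
    ((G.map_comp _ _).symm.trans ((congr_arg G.map A.counit).trans (G.map_id _)))

theorem isCosplitPair_map_unit (A : adj.toComonad.Coalgebra) :
    F.IsCosplitPair (G.map A.a) (adj.unit.app (G.obj A.A)) :=
  ⟨_, _, ⟨beckSplitEqualizer A⟩⟩

theorem hasEqualizer_and_preservesLimit_forget (T : Comonad C) {X Y : T.Coalgebra} (p q : X ⟶ Y)
    [HasEqualizer p.f q.f] [PreservesLimit (parallelPair p.f q.f) T.toFunctor]
    [PreservesLimit (parallelPair p.f q.f) (T.toFunctor ⋙ T.toFunctor)] :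
    HasEqualizer p q ∧ PreservesLimit (parallelPair p q) T.forget :=
  let i : parallelPair p.f q.f ≅ parallelPair p q ⋙ T.forget :=
    (diagramIsoParallelPair (parallelPair p q ⋙ T.forget)).symm
  have := preservesLimit_comp_of_hasLimit (parallelPair p.f q.f) T.toFunctor T.toFunctor
  have := preservesLimit_of_iso_diagram T.toFunctor i
  have := preservesLimit_of_iso_diagram T.toFunctor (Functor.isoWhiskerRight i T.toFunctor)
  letI := forgetCreatesLimit (parallelPair p q)
  have := hasLimit_of_iso i
  ⟨hasLimit_of_created _ T.forget, inferInstance⟩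

instance id_cofree_isEquivalence : (Comonad.id C).cofree.IsEquivalence where
  faithful := ⟨fun h => congrArg Coalgebra.Hom.f h⟩
  full := ⟨fun g => ⟨g.f, by ext; rfl⟩⟩
  essSurj := ⟨fun A => ⟨A.A, ⟨Coalgebra.isoMk (Iso.refl _) (by
    have ha : A.a = 𝟙 A.A := (Category.comp_id A.a).symm.trans A.counit
    rw [ha]; rfl)⟩⟩⟩

theorem hasEqualizer_and_preservesLimit_of_isCosplitPair {T : Comonad D} {H : C ⥤ D}
    (P : C ⥤ T.Coalgebra) [P.IsEquivalence] (e : P ⋙ T.forget ≅ H) {X Y : C} (f g : X ⟶ Y)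
    [H.IsCosplitPair f g] : HasEqualizer f g ∧ PreservesLimit (parallelPair f g) H := by
  let i : (parallelPair f g ⋙ P) ⋙ T.forget ≅ parallelPair (H.map f) (H.map g) :=
    Functor.associator _ _ _ ≪≫ Functor.isoWhiskerLeft _ e ≪≫ diagramIsoParallelPair _
  let j : ((parallelPair f g ⋙ P) ⋙ T.forget) ⋙ T.toFunctor ≅
      parallelPair (T.map (H.map f)) (T.map (H.map g)) :=
    Functor.isoWhiskerRight i T.toFunctor ≪≫ diagramIsoParallelPair _
  have := preservesLimit_of_iso_diagram T.toFunctor i.symm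
  have := preservesLimit_of_iso_diagram T.toFunctor j.symm
  let := forgetCreatesLimit (parallelPair f g ⋙ P)
  let := createsLimitOfNatIso (K := parallelPair f g) e
  have := hasLimit_of_iso (show parallelPair (H.map f) (H.map g) ≅ parallelPair f g ⋙ H from
    (diagramIsoParallelPair (parallelPair f g ⋙ H)).symm)
  exact ⟨hasLimit_of_created _ H, inferInstance⟩

end CategoryTheory.Comonad

end

open Comonad

def HasCoreflexiveHSplitEqualizers (H : M ⥤ N) : Prop :=
  ∀ {A B : M} (f g : A ⟶ B), IsCoreflexivePair f g → IsHSplitPair H f g → HasEqualizer f g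

def PreservesCoreflexiveHSplitEqualizers {P : Type*} [Category P] (H : M ⥤ N) (F : M ⥤ P) :
    Prop :=
  ∀ {A B : M} (f g : A ⟶ B), IsCoreflexivePair f g → IsHSplitPair H f g →
    PreservesEqualizerOf F f g

theorem hasEqualizer_and_preservesLimit_forget_comp {H : M ⥤ N}
    (hEq : HasCoreflexiveHSplitEqualizers H) (hH : PreservesCoreflexiveHSplitEqualizers H H)
    (C : Comonad M) (hC : PreservesCoreflexiveHSplitEqualizers H C.toFunctor)
    (hCC : PreservesCoreflexiveHSplitEqualizers H (C.toFunctor ⋙ C.toFunctor))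
    {X Y : C.Coalgebra} (p q : X ⟶ Y) (hcoref : IsCoreflexivePair p.f q.f)
    (hsplit : IsHSplitPair H p.f q.f) :
    HasEqualizer p q ∧ PreservesLimit (parallelPair p q) (C.forget ⋙ H) := by
  have hfg := hEq _ _ hcoref hsplit
  have := PreservesEqualizerOf.preservesLimit hfg (hC _ _ hcoref hsplit)
  have := PreservesEqualizerOf.preservesLimit hfg (hCC _ _ hcoref hsplit)
  have := PreservesEqualizerOf.preservesLimit hfg (hH _ _ hcoref hsplit)
  obtain ⟨_, _⟩ := hasEqualizer_and_preservesLimit_forget C p q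
  have := preservesLimit_of_iso_diagram H
    (show parallelPair p.f q.f ≅ parallelPair p q ⋙ C.forget from
      (diagramIsoParallelPair (parallelPair p q ⋙ C.forget)).symm)
  exact ⟨inferInstance, inferInstance⟩

theorem comparison_comp_isEquivalence {H : M ⥤ N} {K : N ⥤ M} (adj : H ⊣ K)
    [H.ReflectsIsomorphisms] (hEq : HasCoreflexiveHSplitEqualizers H)
    (hH : PreservesCoreflexiveHSplitEqualizers H H)
    (C : Comonad M) (hC : PreservesCoreflexiveHSplitEqualizers H C.toFunctor)
    (hCC : PreservesCoreflexiveHSplitEqualizers H (C.toFunctor ⋙ C.toFunctor)) :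
    (comparison (C.adj.comp adj)).IsEquivalence := by
  let adj' := C.adj.comp adj
  have beckPair (A : adj'.toComonad.Coalgebra) :
      HasEqualizer ((K ⋙ C.cofree).map A.a) (adj'.unit.app ((K ⋙ C.cofree).obj A.A)) ∧
      PreservesLimit (parallelPair ((K ⋙ C.cofree).map A.a)
        (adj'.unit.app ((K ⋙ C.cofree).obj A.A))) (C.forget ⋙ H) := by
    have := isCoreflexivePair_unit_map adj' A
    obtain ⟨hEqA, hPresA⟩ := hasEqualizer_and_preservesLimit_forget_comp hEq hH C hC hCC
      (adj'.unit.app ((K ⋙ C.cofree).obj A.A)) ((K ⋙ C.cofree).map A.a)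
      (IsCoreflexivePair.map C.forget (adj'.unit.app ((K ⋙ C.cofree).obj A.A))
        ((K ⋙ C.cofree).map A.a))
      (isHSplitPair_iff_isCosplitPair.2 (isCosplitPair_map_unit adj' A))
    exact ⟨hasEqualizer_swap hEqA, PreservesEqualizerOf.preservesLimit (hasEqualizer_swap hEqA)
      (PreservesEqualizerOf.swap_s11 (PreservesEqualizerOf.of_preservesLimit hPresA))⟩
  have := fun A => (beckPair A).1
  have := fun A => (beckPair A).2
  exact comparison_isEquivalence adj'

theorem reflectsIsomorphisms_and_hSplit_equalizers_of_comparison_id {H : M ⥤ N} {K : N ⥤ M}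
    (adj : H ⊣ K) [(comparison ((Comonad.id M).adj.comp adj)).IsEquivalence] :
    H.ReflectsIsomorphisms ∧ ∀ {A B : M} (f g : A ⟶ B), IsHSplitPair H f g →
      HasEqualizer f g ∧ PreservesEqualizerOf H f g := by
  let adj' := (Comonad.id M).adj.comp adj
  let P := (Comonad.id M).cofree ⋙ comparison adj'
  let e : P ⋙ adj'.toComonad.forget ≅ H := NatIso.ofComponents (fun X => Iso.refl _) (by
    intro X Y f
    change H.map f ≫ 𝟙 _ = 𝟙 _ ≫ H.map f
    simp)
  refine ⟨reflectsIsomorphisms_of_iso e, fun f g hsplit => ?_⟩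
  have := isHSplitPair_iff_isCosplitPair.1 hsplit
  obtain ⟨hEq, hPres⟩ := hasEqualizer_and_preservesLimit_of_isCosplitPair P e g f
  exact ⟨hasEqualizer_swap hEq,
    PreservesEqualizerOf.swap_s11 (PreservesEqualizerOf.of_preservesLimit hPres)⟩

/-- **The Conjugate Comonadicity Theorem.**  Let `(H, K)` be an adjunction.  The following
are equivalent:
(i) for every comonad `C` on `M` such that `C` and `C²` preserve equalizers of coreflexive
`H`-split pairs, the comparison functor `Q_C : M_C → N_{C̃}` into coalgebras over the
conjugate comonad `C̃ = HCK` (the comonad of the composite adjunction `(H U_C, F_C K)`)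
is an equivalence;
(ii) `M` has equalizers of all coreflexive `H`-split pairs, `H` preserves these
equalizers, and `H` is conservative. -/
theorem stmt_11 {H : M ⥤ N} {K : N ⥤ M} (adj : H ⊣ K) :
    (∀ C : Comonad M,
      (∀ {A B : M} (f g : A ⟶ B), IsCoreflexivePair f g → IsHSplitPair H f g →
        PreservesEqualizerOf C.toFunctor f g ∧
        PreservesEqualizerOf (C.toFunctor ⋙ C.toFunctor) f g) →
      (Comonad.comparison (C.adj.comp adj)).IsEquivalence) ↔
    ((∀ {A B : M} (f g : A ⟶ B), IsCoreflexivePair f g → IsHSplitPair H f g →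
        HasEqualizer f g) ∧
     (∀ {A B : M} (f g : A ⟶ B), IsCoreflexivePair f g → IsHSplitPair H f g →
        PreservesEqualizerOf H f g) ∧
     (∀ {A B : M} (f : A ⟶ B), IsIso (H.map f) → IsIso f)) := by
  constructor
  · intro h
    have := h (Comonad.id M) fun f g _ _ =>
      ⟨preservesEqualizerOf_id f g, preservesEqualizerOf_id f g⟩
    obtain ⟨_, hsplit⟩ := reflectsIsomorphisms_and_hSplit_equalizers_of_comparison_id adj
    exact ⟨fun f g _ hs => (hsplit f g hs).1, fun f g _ hs => (hsplit f g hs).2,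
      fun f _ => isIso_of_reflects_iso f H⟩
  · rintro ⟨hEq, hH, hCons⟩ C hC
    have : H.ReflectsIsomorphisms := ⟨fun f _ => hCons f inferInstance⟩
    exact comparison_comp_isEquivalence adj hEq hH C (fun f g h₁ h₂ => (hC f g h₁ h₂).1)
      (fun f g h₁ h₂ => (hC f g h₁ h₂).2)
end

section
/- Let D and E be comonads on the same category N and let ρ : E → D be a natural transformation such that (1_N, ρ) is a colax morphism of comonads. Then the induced functor I_ρ : N_E → N_D between coalgebra categories is an equivalence if and only if ρ is an invertible natural transformation. -/
/-!
A morphism of comonads `θ : G₁ ⟶ G₂` induces a functor `I` on coalgebras, `(A, a) ↦ (A, θ_A ∘ a)`,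
and `F` is this functor. If `θ` is invertible, `θ⁻¹` induces an inverse of `I`.

Conversely, suppose `I` is an equivalence. The component `θ_X` is a coalgebra morphism
`r : I (cofree₁ X) ⟶ cofree₂ X`, and under the cofree adjunctions `I.map g ≫ r` transposes to
the transpose of `g`. As `I` is full and essentially surjective, `I (cofree₁ X)` thus has the
universal property of `cofree₂ X`, so `r`, and hence `θ_X`, is an isomorphism.
-/

open CategoryTheory

namespace CategoryTheory.Comonad

universe v u

variable {C : Type u} [Category.{v} C]

theorem Coalgebra.ext {G : Comonad C} {A B : Coalgebra G} (h : A.A = B.A)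
    (h' : A.a = eqToHom h ≫ B.a ≫ eqToHom (congrArg G.obj h).symm) : A = B := by
  obtain ⟨A, a, _, _⟩ := A
  obtain ⟨B, b, _, _⟩ := B
  obtain rfl : A = B := h
  obtain rfl : a = b := by simpa using h'
  rfl

-- Reducible, so that the carrier of `(coalgebraFunctorOfComonadHom θ).obj A` is `A.A` for
-- `simp` and `rw`.
@[simps, reducible]
def coalgebraFunctorOfComonadHom {G₁ G₂ : Comonad C} (θ : G₁ ⟶ G₂) :
    Coalgebra G₁ ⥤ Coalgebra G₂ where
  obj A :=
    { A := A.A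
      a := A.a ≫ θ.app A.A
      counit := by simp [A.counit]
      coassoc := by
        simp only [Category.assoc, θ.app_δ, Functor.map_comp, A.coassoc_assoc]
        rw [θ.naturality_assoc] }
  map f :=
    { f := f.f
      h := by
        dsimp only
        rw [Category.assoc, ← θ.naturality, f.h_assoc] }

theorem eq_coalgebraFunctorOfComonadHom {G₁ G₂ : Comonad C} (θ : G₁ ⟶ G₂)
    (F : Coalgebra G₁ ⥤ Coalgebra G₂) (hF : F ⋙ G₂.forget = G₁.forget)
    (hFa : ∀ A : Coalgebra G₁, (F.obj A).a = eqToHom (Functor.congr_obj hF A) ≫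
      (A.a ≫ θ.app A.A) ≫ eqToHom (congrArg G₂.obj (Functor.congr_obj hF A)).symm) :
    F = coalgebraFunctorOfComonadHom θ := by
  refine Functor.ext (fun A => Coalgebra.ext (Functor.congr_obj hF A) (hFa A))
    fun A B f => G₂.forget.map_injective ?_
  rw [Functor.map_comp, Functor.map_comp, eqToHom_map, eqToHom_map]
  exact Functor.congr_hom hF f

def coalgebraEquivOfIsoComonads {G₁ G₂ : Comonad C} (θ : G₁ ≅ G₂) :
    Coalgebra G₁ ≌ Coalgebra G₂ where
  functor := coalgebraFunctorOfComonadHom θ.hom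
  inverse := coalgebraFunctorOfComonadHom θ.inv
  unitIso := NatIso.ofComponents fun A => Coalgebra.isoMk (Iso.refl _)
    (by simpa using (A.a ≫= (ComonadIso.toNatIso θ).hom_inv_id_app A.A).symm)
  counitIso := NatIso.ofComponents fun A => Coalgebra.isoMk (Iso.refl _)
    (by simpa using A.a ≫= (ComonadIso.toNatIso θ).inv_hom_id_app A.A)

section CofreeComparison

variable {G₁ G₂ : Comonad C} (θ : G₁ ⟶ G₂)

def cofreeComparison (X : C) :
    (coalgebraFunctorOfComonadHom θ).obj (G₁.cofree.obj X) ⟶ G₂.cofree.obj X where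
  f := θ.app X
  h := (Category.assoc _ _ _).trans (θ.app_δ X).symm

theorem adj_homEquiv_symm_map_comp_cofreeComparison {A : Coalgebra G₁} {X : C}
    (g : A ⟶ G₁.cofree.obj X) :
    (G₂.adj.homEquiv _ X).symm ((coalgebraFunctorOfComonadHom θ).map g ≫ cofreeComparison θ X) =
      (G₁.adj.homEquiv A X).symm g := by
  rw [Adjunction.homEquiv_counit, Adjunction.homEquiv_counit, adj_counit, adj_counit]
  exact (Category.assoc g.f (θ.app X) (G₂.ε.app X)).trans (congrArg (g.f ≫ ·) (θ.app_ε X))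

theorem isIso_cofreeComparison [(coalgebraFunctorOfComonadHom θ).IsEquivalence] (X : C) :
    IsIso (cofreeComparison θ X) := by
  set I := coalgebraFunctorOfComonadHom θ
  set r := cofreeComparison θ X
  have hr {A : Coalgebra G₁} (g : A ⟶ G₁.cofree.obj X) :
      (G₂.adj.homEquiv _ X).symm (I.map g ≫ r) = (G₁.adj.homEquiv A X).symm g :=
    adj_homEquiv_symm_map_comp_cofreeComparison θ g
  let A := I.objPreimage (G₂.cofree.obj X)
  let φ : I.obj A ≅ G₂.cofree.obj X := I.objObjPreimageIso _
  let s : A ⟶ G₁.cofree.obj X := G₁.adj.homEquiv _ _ ((G₂.adj.homEquiv _ _).symm φ.hom)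
  have hsr : I.map s ≫ r = φ.hom :=
    (G₂.adj.homEquiv _ X).symm.injective ((hr s).trans (Equiv.symm_apply_apply _ _))
  obtain ⟨t, ht⟩ := I.map_surjective (r ≫ φ.inv ≫ I.map s)
  have ht_id : t = 𝟙 _ := by
    apply (G₁.adj.homEquiv _ X).symm.injective
    rw [← hr, ← hr, ht, Category.assoc, Category.assoc, hsr, φ.inv_hom_id, I.map_id,
      Category.comp_id, Category.id_comp]
  refine ⟨φ.inv ≫ I.map s, ?_, by rw [Category.assoc, hsr, φ.inv_hom_id]⟩
  rw [← ht, ht_id, I.map_id]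

theorem isIso_of_isEquivalence_coalgebraFunctorOfComonadHom
    [(coalgebraFunctorOfComonadHom θ).IsEquivalence] : IsIso θ := by
  have (X : C) : IsIso (((comonadToFunctor C).map θ).app X) :=
    have := isIso_cofreeComparison θ X
    inferInstanceAs (IsIso ((forget G₂).map (cofreeComparison θ X)))
  have : IsIso ((comonadToFunctor C).map θ) := NatIso.isIso_of_isIso_app _
  exact isIso_of_reflects_iso θ (comonadToFunctor C)

end CofreeComparison

end CategoryTheory.Comonad

/-- Let `D` and `E` be comonads on the same category `N` and `ρ : E ⟶ D` a natural
transformation such that `(1_N, ρ)` is a colax morphism of comonads.  Let `F` be the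
induced functor `I_ρ : N_E → N_D` (characterized by commuting with the forgetful functors
and sending a coalgebra `(N, a)` to `(N, ρ_N ∘ a)`).  Then `F` is an equivalence if and
only if `ρ` is invertible. -/
theorem stmt_15 {N : Type*} [Category N] (E D : Comonad N)
    (ρ : E.toFunctor ⟶ D.toFunctor)
    (colax_ε : ∀ X : N, ρ.app X ≫ D.ε.app X = E.ε.app X)
    (colax_δ : ∀ X : N,
      ρ.app X ≫ D.δ.app X = E.δ.app X ≫ ρ.app (E.obj X) ≫ D.map (ρ.app X))
    (F : E.Coalgebra ⥤ D.Coalgebra) (hF : F ⋙ D.forget = E.forget)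
    (hFa : ∀ A : E.Coalgebra,
      (F.obj A).a =
        eqToHom (Functor.congr_obj hF A) ≫ (A.a ≫ ρ.app A.A) ≫
          eqToHom (congrArg (fun Z => D.obj Z) (Functor.congr_obj hF A)).symm) :
    F.IsEquivalence ↔ IsIso ρ := by
  let θ : E ⟶ D := { toNatTrans := ρ, app_ε := colax_ε, app_δ := colax_δ }
  obtain rfl : F = Comonad.coalgebraFunctorOfComonadHom θ :=
    Comonad.eq_coalgebraFunctorOfComonadHom θ F hF hFa
  refine ⟨fun _ => ?_, fun _ => ?_⟩
  · have := Comonad.isIso_of_isEquivalence_coalgebraFunctorOfComonadHom θ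
    exact inferInstanceAs (IsIso ((comonadToFunctor N).map θ))
  · exact (Comonad.coalgebraEquivOfIsoComonads
      (ComonadIso.mk (asIso ρ) colax_ε colax_δ)).isEquivalence_functor
end
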